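/- arXiv:2305.08715 — 2 statements merged into one kernel-verified Lean document; each statement's English description precedes it below -/
import Mathlib

section
/- Let C(z) be the quantum Cartan matrix of type A_n and C̃(z) its inverse. Then for 1 ≤ i ≤ j ≤ n, as formal power series in z one has C̃(z)_{ij} = (Σ_{s=0}^{n-j} z^{j-i+2s+1} − Σ_{s=0}^{n-j} z^{j+i+2s+1}) · (Σ_{k≥0} z^{2(n+1)k}). -/
/-- `z·C(z)` for the type `Aₙ` quantum Cartan matrix, as a matrix over `ℤ[[z]]`:
diagonal entries `z² + 1`, entries `-z` at positions with `|i - j| = 1`, `0` otherwise. -/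
noncomputable def zqCartanA (n : ℕ) : Matrix (Fin n) (Fin n) (PowerSeries ℤ) :=
  Matrix.of fun i j =>
    if i = j then PowerSeries.X ^ 2 + 1
    else if (i : ℕ) + 1 = (j : ℕ) ∨ (j : ℕ) + 1 = (i : ℕ) then -PowerSeries.X else 0

/-- The power series expansion of the `(i,j)` entry of the inverse quantum Cartan matrix
of type `Aₙ`: `C̃(z)_{ij} = z · ((z·C(z))⁻¹)_{ij} ∈ ℤ[[z]]`. -/
noncomputable def cTildeA (n : ℕ) (i j : Fin n) : PowerSeries ℤ :=
  PowerSeries.X * (zqCartanA n)⁻¹ i j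

/-- The geometric series `Σ_{k ≥ 0} z^{2(n+1)k} ∈ ℤ[[z]]`. -/
noncomputable def geomA (n : ℕ) : PowerSeries ℤ :=
  PowerSeries.mk fun m => if 2 * (n + 1) ∣ m then 1 else 0

open PowerSeries Finset

/-- The truncated geometric sum `Σ_{t < m} z^{2t}`. -/
noncomputable def dkA (m : ℕ) : PowerSeries ℤ := ∑ t ∈ Finset.range m, (X : ℤ⟦X⟧) ^ (2 * t)

lemma dkA_zero : dkA 0 = 0 := by simp [dkA]

lemma dkA_one : dkA 1 = 1 := by simp [dkA]

lemma dkA_succ' (m : ℕ) : dkA (m + 1) = dkA m + X ^ (2 * m) := by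
  rw [dkA, dkA, Finset.sum_range_succ]

lemma dkA_add (a b : ℕ) : dkA (a + b) = dkA a + X ^ (2 * a) * dkA b := by
  rw [dkA, dkA, dkA, Finset.sum_range_add, Finset.mul_sum]
  congr 1
  exact Finset.sum_congr rfl fun i _ => by rw [← pow_add]; congr 1; ring

lemma dkA_succ (m : ℕ) : dkA (m + 1) = 1 + X ^ 2 * dkA m := by
  rw [show m + 1 = 1 + m by omega, dkA_add, dkA_one]

lemma one_sub_sq_mul_dkA (m : ℕ) : (1 - (X : ℤ⟦X⟧) ^ 2) * dkA (m + 1) = 1 - X ^ (2 * (m + 1)) := by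
  have h := geom_sum_mul ((X : ℤ⟦X⟧) ^ 2) (m + 1)
  have hd : dkA (m + 1) = ∑ i ∈ range (m + 1), ((X : ℤ⟦X⟧) ^ 2) ^ i := by
    simp [dkA, pow_mul]
  rw [hd, pow_mul]
  linear_combination -h

lemma one_sub_pow_mul_geomA (n : ℕ) : (1 - (X : ℤ⟦X⟧) ^ (2 * (n + 1))) * geomA n = 1 := by
  ext m
  rw [sub_mul, one_mul, map_sub, PowerSeries.coeff_X_pow_mul']
  simp only [geomA, PowerSeries.coeff_mk, PowerSeries.coeff_one]
  by_cases hm : m = 0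
  · subst hm
    rw [if_neg (show ¬ 2 * (n + 1) ≤ 0 by omega), if_pos (dvd_zero (2 * (n + 1))),
      if_pos rfl, sub_zero]
  · rw [if_neg hm]
    by_cases hle : 2 * (n + 1) ≤ m
    · have hiff : (2 * (n + 1) ∣ m) ↔ (2 * (n + 1) ∣ m - 2 * (n + 1)) := by
        constructor
        · intro hd; exact Nat.dvd_sub hd dvd_rfl
        · intro hd
          have h2 := Nat.dvd_add dvd_rfl hd
          rwa [Nat.add_sub_cancel' hle] at h2
      rw [if_pos hle]
      by_cases hd : 2 * (n + 1) ∣ m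
      · rw [if_pos hd, if_pos (hiff.mp hd), sub_self]
      · rw [if_neg hd, if_neg (fun h => hd (hiff.mpr h)), sub_self]
    · have hd : ¬ 2 * (n + 1) ∣ m := by
        intro hd
        have := Nat.le_of_dvd (Nat.pos_of_ne_zero hm) hd
        omega
      rw [if_neg hle, if_neg hd, sub_zero]

/-- The inverse of `dkA (n+1)`. -/
noncomputable def EA (n : ℕ) : PowerSeries ℤ := (1 - X ^ 2) * geomA n

lemma dkA_mul_EA (n : ℕ) : dkA (n + 1) * EA n = 1 := by
  rw [EA]
  calc dkA (n + 1) * ((1 - X ^ 2) * geomA n)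
      = ((1 - X ^ 2) * dkA (n + 1)) * geomA n := by ring
    _ = (1 - X ^ (2 * (n + 1))) * geomA n := by rw [one_sub_sq_mul_dkA]
    _ = 1 := one_sub_pow_mul_geomA n

/-- The candidate inverse entries: `F n k a` is the `(a, k)` entry of `(z C(z))⁻¹`. -/
noncomputable def FA (n k a : ℕ) : PowerSeries ℤ :=
  X ^ (max a k - min a k) * dkA (min a k + 1) * dkA (n - max a k) * EA n

lemma FA_of_ge (n k a : ℕ) (h : n ≤ a) (hk : k ≤ a) : FA n k a = 0 := by
  rw [FA, Nat.max_eq_left hk, Nat.sub_eq_zero_of_le h, dkA_zero, mul_zero, zero_mul]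

lemma FA_rec (n k a : ℕ) (hk : k < n) (ha : a < n) :
    ((X : ℤ⟦X⟧) ^ 2 + 1) * FA n k a + (-X) * FA n k (a + 1) +
      (if a = 0 then 0 else (-X) * FA n k (a - 1)) = if a = k then 1 else 0 := by
  rcases lt_trichotomy a k with h | rfl | h
  · -- a < k
    rw [if_neg (show ¬ a = k by omega)]
    obtain ⟨t, ht⟩ : ∃ t, k = a + 1 + t := ⟨k - a - 1, by omega⟩
    have e1 : FA n k a = X ^ (t + 1) * dkA (a + 1) * dkA (n - k) * EA n := by
      rw [FA, Nat.max_eq_right h.le, Nat.min_eq_left h.le, show k - a = t + 1 by omega]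
    have e2 : FA n k (a + 1) = X ^ t * dkA (a + 1 + 1) * dkA (n - k) * EA n := by
      rw [FA, Nat.max_eq_right (by omega), Nat.min_eq_left (by omega),
        show k - (a + 1) = t by omega]
    rcases Nat.eq_zero_or_pos a with rfl | hpos
    · rw [if_pos rfl, add_zero, e1, e2, dkA_succ (0 + 1), dkA_succ 0, dkA_zero]
      ring
    · rw [if_neg (show ¬ a = 0 by omega), e1, e2]
      have e3 : FA n k (a - 1) = X ^ (t + 2) * dkA a * dkA (n - k) * EA n := by
        rw [FA, Nat.max_eq_right (by omega), Nat.min_eq_left (by omega),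
          show k - (a - 1) = t + 2 by omega, show a - 1 + 1 = a by omega]
      rw [e3, dkA_succ (a + 1), dkA_succ a]
      ring
  · -- a = k (diagonal)
    rw [if_pos rfl]
    obtain ⟨u, hu⟩ : ∃ u, n - a = u + 1 := ⟨n - a - 1, by omega⟩
    have e1 : FA n a a = X ^ 0 * dkA (a + 1) * dkA (u + 1) * EA n := by
      rw [FA, Nat.max_self, Nat.min_self, Nat.sub_self, hu]
    have e2 : FA n a (a + 1) = X ^ 1 * dkA (a + 1) * dkA u * EA n := by
      rw [FA, Nat.max_eq_left (by omega), Nat.min_eq_right (by omega),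
        show a + 1 - a = 1 by omega, show n - (a + 1) = u by omega]
    have hk1 : dkA (a + 1) + X ^ (2 * (a + 1)) * dkA (u + 1) = dkA (n + 1) := by
      rw [show n + 1 = (a + 1) + (u + 1) by omega]
      exact (dkA_add (a + 1) (u + 1)).symm
    have key : (dkA (a + 1) + X ^ (2 * (a + 1)) * dkA (u + 1)) * EA n = 1 := by
      rw [hk1]; exact dkA_mul_EA n
    rcases Nat.eq_zero_or_pos a with rfl | hpos
    · rw [if_pos rfl, add_zero, e1, e2]
      rw [dkA_succ u, dkA_succ' 0, dkA_zero] at key ⊢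
      linear_combination key
    · rw [if_neg (show ¬ a = 0 by omega)]
      have e3 : FA n a (a - 1) = X ^ 1 * dkA a * dkA (u + 1) * EA n := by
        rw [FA, Nat.max_eq_right (by omega), Nat.min_eq_left (by omega),
          show a - (a - 1) = 1 by omega, show a - 1 + 1 = a by omega, hu]
      rw [e1, e2, e3]
      rw [dkA_succ u, dkA_succ' a] at key ⊢
      linear_combination key
  · -- a > k
    rw [if_neg (show ¬ a = 0 by omega), if_neg (show ¬ a = k by omega)]
    obtain ⟨t, ht⟩ : ∃ t, a = k + 1 + t := ⟨a - k - 1, by omega⟩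
    obtain ⟨u, hu⟩ : ∃ u, n = a + 1 + u := ⟨n - a - 1, by omega⟩
    have e1 : FA n k a = X ^ (t + 1) * dkA (k + 1) * dkA (u + 1) * EA n := by
      rw [FA, Nat.max_eq_left (by omega), Nat.min_eq_right (by omega),
        show a - k = t + 1 by omega, show n - a = u + 1 by omega]
    have e2 : FA n k (a + 1) = X ^ (t + 2) * dkA (k + 1) * dkA u * EA n := by
      rw [FA, Nat.max_eq_left (by omega), Nat.min_eq_right (by omega),
        show a + 1 - k = t + 2 by omega, show n - (a + 1) = u by omega]
    have e3 : FA n k (a - 1) = X ^ t * dkA (k + 1) * dkA (u + 1 + 1) * EA n := by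
      rw [FA, Nat.max_eq_left (by omega), Nat.min_eq_right (by omega),
        show a - 1 - k = t by omega, show n - (a - 1) = u + 1 + 1 by omega]
    rw [e1, e2, e3, dkA_succ (u + 1), dkA_succ u]
    ring

/-- The candidate inverse matrix. -/
noncomputable def BmA (n : ℕ) : Matrix (Fin n) (Fin n) (PowerSeries ℤ) :=
  Matrix.of fun a b => FA n (b : ℕ) (a : ℕ)

lemma zq_mul_Bm (n : ℕ) : zqCartanA n * BmA n = 1 := by
  refine Matrix.ext fun i k => ?_
  rw [Matrix.mul_apply, Matrix.one_apply]
  set g : ℕ → ℤ⟦X⟧ := fun m => (if (i : ℕ) = m then (X : ℤ⟦X⟧) ^ 2 + 1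
      else if (i : ℕ) + 1 = m ∨ m + 1 = (i : ℕ) then -X else 0) * FA n (k : ℕ) m with hg
  have hfun : ∀ j : Fin n, zqCartanA n i j * BmA n j k = g ((j : ℕ)) := by
    intro j
    simp only [hg, zqCartanA, BmA, Matrix.of_apply, Fin.ext_iff]
  rw [Finset.sum_congr rfl (fun j _ => hfun j), Fin.sum_univ_eq_sum_range g n]
  simp only [hg]
  have split : ∀ m, (if (i : ℕ) = m then (X : ℤ⟦X⟧) ^ 2 + 1
        else if (i : ℕ) + 1 = m ∨ m + 1 = (i : ℕ) then -X else 0) * FA n (k : ℕ) m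
      = (if m = (i : ℕ) then ((X : ℤ⟦X⟧) ^ 2 + 1) * FA n (k : ℕ) m else 0)
        + (if m = (i : ℕ) + 1 then (-X) * FA n (k : ℕ) m else 0)
        + (if (i : ℕ) = m + 1 then (-X) * FA n (k : ℕ) m else 0) := by
    intro m
    by_cases h1 : (i : ℕ) = m
    · rw [if_pos h1, if_pos (show m = (i : ℕ) from h1.symm),
        if_neg (show ¬ m = (i : ℕ) + 1 by omega), if_neg (show ¬ (i : ℕ) = m + 1 by omega)]
      ring
    · by_cases h2 : (i : ℕ) + 1 = m
      · rw [if_neg h1, if_pos (Or.inl h2), if_neg (show ¬ m = (i : ℕ) by omega),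
          if_pos (show m = (i : ℕ) + 1 from h2.symm),
          if_neg (show ¬ (i : ℕ) = m + 1 by omega)]
        ring
      · by_cases h3 : m + 1 = (i : ℕ)
        · rw [if_neg h1, if_pos (Or.inr h3), if_neg (show ¬ m = (i : ℕ) by omega),
            if_neg (show ¬ m = (i : ℕ) + 1 by omega),
            if_pos (show (i : ℕ) = m + 1 from h3.symm)]
          ring
        · rw [if_neg h1, if_neg (show ¬ ((i : ℕ) + 1 = m ∨ m + 1 = (i : ℕ)) by tauto),
            if_neg (show ¬ m = (i : ℕ) by omega), if_neg (show ¬ m = (i : ℕ) + 1 by omega),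
            if_neg (show ¬ (i : ℕ) = m + 1 by omega)]
          ring
  rw [Finset.sum_congr rfl (fun m _ => split m), Finset.sum_add_distrib,
    Finset.sum_add_distrib, Finset.sum_ite_eq' (Finset.range n) ((i : ℕ)),
    Finset.sum_ite_eq' (Finset.range n) ((i : ℕ) + 1)]
  have h3sum : (∑ m ∈ Finset.range n, if (i : ℕ) = m + 1 then (-X : ℤ⟦X⟧) * FA n (k : ℕ) m else 0)
      = (if (i : ℕ) = 0 then 0 else (-X) * FA n (k : ℕ) ((i : ℕ) - 1)) := by
    rcases Nat.eq_zero_or_pos (i : ℕ) with h0 | h0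
    · rw [h0, if_pos rfl]
      exact Finset.sum_eq_zero fun m _ => if_neg (by omega)
    · obtain ⟨c, hc⟩ : ∃ c, (i : ℕ) = c + 1 := ⟨(i : ℕ) - 1, by omega⟩
      rw [if_neg (by omega)]
      have hcongr : ∀ m ∈ Finset.range n,
          (if (i : ℕ) = m + 1 then (-X : ℤ⟦X⟧) * FA n (k : ℕ) m else 0)
          = (if m = c then (-X) * FA n (k : ℕ) m else 0) := by
        intro m _
        by_cases h : m = c
        · rw [if_pos (by omega), if_pos h]
        · rw [if_neg (by omega), if_neg h]
      rw [Finset.sum_congr rfl hcongr, Finset.sum_ite_eq' (Finset.range n) c,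
        if_pos (Finset.mem_range.2 (by omega)), show c = (i : ℕ) - 1 by omega]
  rw [h3sum, if_pos (Finset.mem_range.2 i.isLt)]
  have h2if : (if (i : ℕ) + 1 ∈ Finset.range n then (-X : ℤ⟦X⟧) * FA n (k : ℕ) ((i : ℕ) + 1) else 0)
      = (-X) * FA n (k : ℕ) ((i : ℕ) + 1) := by
    by_cases h : (i : ℕ) + 1 ∈ Finset.range n
    · rw [if_pos h]
    · have hn : n ≤ (i : ℕ) + 1 := by simp only [Finset.mem_range] at h; omega
      have hkn : (k : ℕ) < n := k.isLt
      rw [if_neg h, FA_of_ge n (k : ℕ) ((i : ℕ) + 1) hn (by omega), mul_zero]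
  rw [h2if, show (if i = k then (1 : ℤ⟦X⟧) else 0)
      = (if (i : ℕ) = (k : ℕ) then 1 else 0) by simp [Fin.ext_iff]]
  exact FA_rec n (k : ℕ) (i : ℕ) k.isLt i.isLt

lemma zq_inv (n : ℕ) : (zqCartanA n)⁻¹ = BmA n :=
  Matrix.inv_eq_right_inv (zq_mul_Bm n)

/-- For `1 ≤ i ≤ j ≤ n` (here realized with 0-based indices `i, j : Fin n`, `i ≤ j`,
so the 1-based exponents `j - i + 2s + 1` and `j + i + 2s + 1` become `j - i + 2s + 1`
and `j + i + 2s + 3`, and the sum `Σ_{s=0}^{n-j}` becomes a sum over `s ∈ range (n - j)`),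
as formal power series in `z`:
`C̃(z)_{ij} = (Σ_s z^{j-i+2s+1} − Σ_s z^{j+i+2s+1}) · (Σ_{k≥0} z^{2(n+1)k})`. -/
theorem stmt1 (n : ℕ) (i j : Fin n) (hij : (i : ℕ) ≤ (j : ℕ)) :
    cTildeA n i j =
      ((∑ s ∈ Finset.range (n - (j : ℕ)),
          (PowerSeries.X : PowerSeries ℤ) ^ ((j : ℕ) - (i : ℕ) + 2 * s + 1)) -
        ∑ s ∈ Finset.range (n - (j : ℕ)),
          (PowerSeries.X : PowerSeries ℤ) ^ ((j : ℕ) + (i : ℕ) + 2 * s + 3)) * geomA n := by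
  have s1 : (∑ s ∈ Finset.range (n - (j : ℕ)),
      (PowerSeries.X : PowerSeries ℤ) ^ ((j : ℕ) - (i : ℕ) + 2 * s + 1))
      = X ^ ((j : ℕ) - (i : ℕ) + 1) * dkA (n - (j : ℕ)) := by
    rw [dkA, Finset.mul_sum]
    exact Finset.sum_congr rfl fun s _ => by rw [← pow_add]; congr 1; omega
  have s2 : (∑ s ∈ Finset.range (n - (j : ℕ)),
      (PowerSeries.X : PowerSeries ℤ) ^ ((j : ℕ) + (i : ℕ) + 2 * s + 3))
      = X ^ ((j : ℕ) - (i : ℕ) + 1) * (X ^ (2 * ((i : ℕ) + 1)) * dkA (n - (j : ℕ))) := by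
    rw [← mul_assoc, ← pow_add, dkA, Finset.mul_sum]
    refine Finset.sum_congr rfl fun s _ => ?_
    rw [← pow_add]
    congr 1
    omega
  rw [cTildeA, zq_inv, BmA, Matrix.of_apply, FA, Nat.max_eq_right hij, Nat.min_eq_left hij,
    s1, s2, EA]
  have key := one_sub_sq_mul_dkA (i : ℕ)
  linear_combination (X ^ ((j : ℕ) - (i : ℕ) + 1) * dkA (n - (j : ℕ)) * geomA n) * key
end

section
/- Let g be simply-laced with index set I, let ξ be a height function, ℓ ≥ 1, and let Î^{≤ξ}_ℓ = {(i,p) : i ∈ I, ξ(i) − 2ℓ ≤ p ≤ ξ(i), p ≡ ξ(i) mod 2}. Define the skew-symmetric matrix L^{≤ξ}_ℓ by L^{≤ξ}_ℓ((i,r),(j,s)) = Σ_{k≥0, r+2k≤ξ(i)} Σ_{l≥0, s+2l≤ξ(j)} N_{ij}(s + 2l − r − 2k), where N_{ij}(k) = C̃_{ij}(k+1) + C̃_{ij}(−k−1) − C̃_{ij}(k−1) − C̃_{ij}(−k+1) (with C̃_{ij}(m) = 0 for m ≤ 0), and let B^{≤ξ}_ℓ be the exchange matrix of the quiver Γ^{≤ξ}_ℓ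 with mutable part Î^{≤ξ}_{ℓ-1}. Then (L^{≤ξ}_ℓ, B^{≤ξ}_ℓ) is a compatible pair: (B^{≤ξ}_ℓ)^T L^{≤ξ}_ℓ = (2·Id | 0), i.e. ((B^{≤ξ}_ℓ)^T L^{≤ξ}_ℓ)((i,r),(j,s)) = 2 if (i,r) = (j,s) and 0 otherwise, for (i,r) mutable. -/
variable {I : Type} [Fintype I] [DecidableEq I]

/-- `z·C(z)` over `ℤ[[z]]` for a symmetric (generalized) Cartan matrix `C`. -/
noncomputable def zqCartan (C : Matrix I I ℤ) : Matrix I I (PowerSeries ℤ) :=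
  Matrix.of fun i j =>
    if i = j then PowerSeries.X ^ 2 + 1 else (C i j : PowerSeries ℤ) * PowerSeries.X

/-- The coefficients `C̃_{ij}(m)` of the inverse quantum Cartan matrix
(`C̃(z)_{ij} = z·((z·C(z))⁻¹)_{ij}`), with `C̃_{ij}(m) = 0` for `m ≤ 0`. -/
noncomputable def cTildeCoeff (C : Matrix I I ℤ) (i j : I) (m : ℤ) : ℤ :=
  if 0 ≤ m then PowerSeries.coeff (R := ℤ) m.toNat (PowerSeries.X * (zqCartan C)⁻¹ i j) else 0

/-- `N_{ij}(k) = C̃_{ij}(k+1) + C̃_{ij}(−k−1) − C̃_{ij}(k−1) − C̃_{ij}(−k+1)`. -/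
noncomputable def Nfun (C : Matrix I I ℤ) (i j : I) (k : ℤ) : ℤ :=
  cTildeCoeff C i j (k + 1) + cTildeCoeff C i j (-k - 1) -
    cTildeCoeff C i j (k - 1) - cTildeCoeff C i j (-k + 1)

/-- The vertex set `Î^{≤ξ}_ℓ = {(i, ξ i − 2k) : i ∈ I, 0 ≤ k ≤ ℓ}`, parameterized by
`I × Fin (ℓ+1)` via `(i, k) ↦ (i, ξ i − 2k)`. -/
def toVertex (ξ : I → ℤ) {ℓ : ℕ} (u : I × Fin (ℓ + 1)) : I × ℤ :=
  (u.1, ξ u.1 - 2 * ((u.2 : ℕ) : ℤ))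

/-- There is an arrow `p → q` in the quiver `Γ` iff `C_{p₁ q₁} ≠ 0` and
`q₂ = p₂ + C_{p₁ q₁}`. -/
def HasArrow (C : Matrix I I ℤ) (p q : I × ℤ) : Prop :=
  C p.1 q.1 ≠ 0 ∧ q.2 = p.2 + C p.1 q.1

instance (C : Matrix I I ℤ) (p q : I × ℤ) : Decidable (HasArrow C p q) := by
  unfold HasArrow; infer_instance

/-- The entry `B_{pq} = #(arrows q → p) − #(arrows p → q)` of the exchange matrix of the
quiver `Γ^{≤ξ}_ℓ` (the diagram being simply laced, arrow multiplicities are `0` or `1`). -/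
noncomputable def Bent (C : Matrix I I ℤ) (p q : I × ℤ) : ℤ :=
  (if HasArrow C q p then 1 else 0) - (if HasArrow C p q then 1 else 0)

/-- The skew-symmetric matrix
`L^{≤ξ}_ℓ((i,r),(j,s)) = Σ_{k≥0, r+2k≤ξ i} Σ_{l≥0, s+2l≤ξ j} N_{ij}(s+2l−r−2k)`,
in the parameterization `(i, r) = (u₁, ξ u₁ − 2u₂)` (so `k` ranges over `0, …, u₂`). -/
noncomputable def Lmat (C : Matrix I I ℤ) (ξ : I → ℤ) {ℓ : ℕ}
    (u v : I × Fin (ℓ + 1)) : ℤ :=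
  ∑ a ∈ Finset.range ((u.2 : ℕ) + 1), ∑ b ∈ Finset.range ((v.2 : ℕ) + 1),
    Nfun C u.1 v.1 ((ξ v.1 - 2 * ((v.2 : ℕ) : ℤ) + 2 * (b : ℤ)) -
      (ξ u.1 - 2 * ((u.2 : ℕ) : ℤ)) - 2 * (a : ℤ))

/-!
Reading off coefficients of `(z·C(z)) · (z·C(z))⁻¹ = 1` gives the three-term recurrence for `C̃`;
adding its instances at `±(k + 2)` and subtracting those at `±k` gives
`N_{jc}(k) + N_{jc}(k+2) + Σ_{i ≠ j} C_{ji} N_{ic}(k+1) = 2 δ_{jc} (δ_{k,-2} - δ_{k,0})`.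

The column of `B` at a mutable vertex `w = (j, r)` is `+1` at `(j, r + 2)`, `-1` at `(j, r - 2)`,
and, for each `i ~ j`, `+1` at `(i, r - 1)` and `-1` at `(i, r + 1)`. As `L((i, r'), v)` is the
partial sum over `r' ≤ r'' ≤ ξ i` of the rows `R_i(r'') = Σ_l N_{ic}(s + 2l - r'')`, pairing it
with this column telescopes to `-(R_j(r) + R_j(r - 2) + Σ_{i ≠ j} C_{ji} R_i(r - 1))`. By the
`N`-recurrence this is `2 δ_{jc} Σ_l ([s + 2l = r] - [s + 2l + 2 = r])`, which telescopes to `2`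
if `w = v` and to `0` otherwise.
-/

open PowerSeries Finset

lemma isUnit_det_zqCartan (C : Matrix I I ℤ) : IsUnit (zqCartan C).det := by
  have h : (constantCoeff (R := ℤ)).mapMatrix (zqCartan C) = 1 := by
    ext i j
    by_cases h : i = j <;> simp [zqCartan, Matrix.one_apply, h]
  rw [isUnit_iff_constantCoeff, RingHom.map_det, h, Matrix.det_one]
  exact isUnit_one

lemma zqCartan_mul_inv_apply (C : Matrix I I ℤ) (i j : I) :
    (zqCartan C)⁻¹ i j + X ^ 2 * (zqCartan C)⁻¹ i j +
        ∑ u ∈ univ.erase i, C i u • (X * (zqCartan C)⁻¹ u j) =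
      if i = j then 1 else 0 := by
  have h := congrFun (congrFun (Matrix.mul_nonsing_inv _ (isUnit_det_zqCartan C)) i) j
  rw [Matrix.mul_apply, ← add_sum_erase _ _ (mem_univ i), Matrix.one_apply] at h
  rw [← h, zqCartan, Matrix.of_apply, if_pos rfl]
  congr 1
  · ring
  · refine sum_congr rfl fun u hu => ?_
    rw [Matrix.of_apply, if_neg (ne_of_mem_erase hu).symm, zsmul_eq_mul]
    ring

lemma cTildeCoeff_of_nonpos (C : Matrix I I ℤ) (i j : I) {m : ℤ} (hm : m ≤ 0) :
    cTildeCoeff C i j m = 0 := by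
  unfold cTildeCoeff
  split_ifs with h
  · simp [show m.toNat = 0 by omega, coeff_zero_eq_constantCoeff]
  · rfl

lemma coeff_X_pow_mul_inv_zqCartan (C : Matrix I I ℤ) (i j : I) (n k : ℕ) :
    coeff n (X ^ k * (zqCartan C)⁻¹ i j) = cTildeCoeff C i j (n - k + 1) := by
  rw [coeff_X_pow_mul']
  split_ifs with h
  · rw [cTildeCoeff, if_pos (by omega), show (n - k + 1 : ℤ).toNat = n - k + 1 by omega,
      coeff_succ_X_mul]
  · rw [cTildeCoeff_of_nonpos _ _ _ (by omega)]

lemma cTildeCoeff_recurrence (C : Matrix I I ℤ) (i j : I) (m : ℤ) :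
    cTildeCoeff C i j (m - 1) + cTildeCoeff C i j (m + 1) +
        ∑ u ∈ univ.erase i, C i u * cTildeCoeff C u j m =
      if i = j ∧ m = 0 then 1 else 0 := by
  rcases lt_or_ge m 0 with hm | hm
  · simp [cTildeCoeff_of_nonpos, hm.le, show m + 1 ≤ 0 by omega, show m - 1 ≤ 0 by omega, hm.ne]
  obtain ⟨n, rfl⟩ := Int.eq_ofNat_of_zero_le hm
  have h := congrArg (coeff n) (zqCartan_mul_inv_apply C i j)
  have h0 := coeff_X_pow_mul_inv_zqCartan C i j n 0
  have h1 := fun u => coeff_X_pow_mul_inv_zqCartan C u j n 1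
  rw [pow_zero, one_mul] at h0
  simp only [pow_one] at h1
  simp only [map_add, map_sum, map_zsmul, h0, h1, coeff_X_pow_mul_inv_zqCartan, smul_eq_mul,
    Nat.cast_zero, Nat.cast_one, Nat.cast_ofNat, sub_zero, sub_add_cancel,
    show (n : ℤ) - 2 + 1 = n - 1 by ring] at h
  rw [add_comm (cTildeCoeff C i j _), h]
  split_ifs <;> simp_all [coeff_one]

lemma Nfun_recurrence (C : Matrix I I ℤ) (j c : I) (k : ℤ) :
    Nfun C j c k + Nfun C j c (k + 2) + ∑ i ∈ univ.erase j, C j i * Nfun C i c (k + 1) =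
      if j = c then 2 * ((if k + 2 = 0 then 1 else 0) - if k = 0 then 1 else 0) else 0 := by
  have h1 := cTildeCoeff_recurrence C j c (k + 2)
  have h2 := cTildeCoeff_recurrence C j c (-(k + 2))
  have h3 := cTildeCoeff_recurrence C j c k
  have h4 := cTildeCoeff_recurrence C j c (-k)
  simp only [neg_eq_zero] at h2 h4
  simp only [Nfun, mul_add, mul_sub, sum_add_distrib, sum_sub_distrib]
  by_cases hjc : j = c
  · simp only [hjc, true_and, if_true] at *
    split_ifs at * <;> first | omega | linear_combination (norm := ring_nf) h1 + h2 - h3 - h4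
  · simp only [hjc, false_and, if_false] at *
    linear_combination (norm := ring_nf) h1 + h2 - h3 - h4

omit [Fintype I] [DecidableEq I] in
lemma sum_range_Bent_mul (C : Matrix I I ℤ) (p : ℕ → I × ℤ) (w : I × ℤ) (G : ℕ → ℤ)
    {N s t : ℕ} (hs : s < N) (ht : t < N) (hin : ∀ n, HasArrow C w (p n) ↔ n = s)
    (hout : ∀ n, HasArrow C (p n) w ↔ n = t) :
    ∑ n ∈ range N, Bent C (p n) w * G n = G s - G t := by
  simp only [Bent, sub_mul, ite_mul, one_mul, zero_mul, hin, hout, sum_sub_distrib, sum_ite_eq',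
    mem_range, hs, ht, if_true]

noncomputable def rowSum (C : Matrix I I ℤ) (ξ : I → ℤ) {ℓ : ℕ} (i : I) (v : I × Fin (ℓ + 1))
    (r : ℤ) : ℤ :=
  ∑ b ∈ range ((v.2 : ℕ) + 1), Nfun C i v.1 (ξ v.1 - 2 * ((v.2 : ℕ) : ℤ) + 2 * (b : ℤ) - r)

lemma Lmat_eq_sum_rowSum (C : Matrix I I ℤ) (ξ : I → ℤ) {ℓ : ℕ} (u v : I × Fin (ℓ + 1)) :
    Lmat C ξ u v = ∑ a ∈ range ((u.2 : ℕ) + 1), rowSum C ξ u.1 v (ξ u.1 - 2 * (a : ℤ)) := by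
  rw [Lmat, ← sum_range_reflect]
  refine sum_congr rfl fun a ha => sum_congr rfl fun b _ => congrArg _ ?_
  have := mem_range.mp ha
  rw [add_tsub_cancel_right, Nat.cast_sub (by omega)]
  ring

-- Reindexed by the number `n = a + 1` of terms in the partial sum; the new `n = 0` term vanishes.
lemma sum_Bent_toVertex_mul_Lmat (C : Matrix I I ℤ) (ξ : I → ℤ) {ℓ : ℕ} (i : I) (w : I × ℤ)
    (v : I × Fin (ℓ + 1)) :
    ∑ a : Fin (ℓ + 1), Bent C (toVertex ξ (i, a)) w * Lmat C ξ (i, a) v =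
      ∑ n ∈ range (ℓ + 2), Bent C (i, ξ i + 2 - 2 * (n : ℤ)) w *
        ∑ a ∈ range n, rowSum C ξ i v (ξ i - 2 * (a : ℤ)) := by
  rw [sum_range_succ', sum_range_zero, mul_zero, add_zero]
  simp only [toVertex, Lmat_eq_sum_rowSum]
  rw [Fin.sum_univ_eq_sum_range (fun a => Bent C (i, ξ i - 2 * (a : ℤ)) w *
      ∑ t ∈ range (a + 1), rowSum C ξ i v (ξ i - 2 * (t : ℤ)))]
  refine sum_congr rfl fun a _ => ?_
  push_cast
  ring_nf

lemma sum_Bent_mul_Lmat_self (C : Matrix I I ℤ) (hdiag : ∀ i, C i i = 2) (ξ : I → ℤ) {ℓ e : ℕ}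
    (he : e < ℓ) (j : I) (v : I × Fin (ℓ + 1)) :
    ∑ a : Fin (ℓ + 1), Bent C (toVertex ξ (j, a)) (j, ξ j - 2 * (e : ℤ)) * Lmat C ξ (j, a) v =
      -(rowSum C ξ j v (ξ j - 2 * e) + rowSum C ξ j v (ξ j - 2 * e - 2)) := by
  rw [sum_Bent_toVertex_mul_Lmat, sum_range_Bent_mul C _ _ _ (s := e) (t := e + 2) (by omega)
    (by omega)]
  · rw [sum_range_succ, sum_range_succ]
    push_cast
    ring_nf
  all_goals intro n; simp only [HasArrow, hdiag]; omega

lemma sum_Bent_mul_Lmat_of_ne (C : Matrix I I ℤ) (hsym : C.IsSymm)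
    (hoff : ∀ i j, i ≠ j → C i j = 0 ∨ C i j = -1) (ξ : I → ℤ)
    (hheight : ∀ i j, C i j = -1 → (ξ i = ξ j + 1 ∨ ξ j = ξ i + 1)) {ℓ e : ℕ} (he : e < ℓ)
    {i j : I} (hij : i ≠ j) (v : I × Fin (ℓ + 1)) :
    ∑ a : Fin (ℓ + 1), Bent C (toVertex ξ (i, a)) (j, ξ j - 2 * (e : ℤ)) * Lmat C ξ (i, a) v =
      -C j i * rowSum C ξ i v (ξ j - 2 * e - 1) := by
  have hji : C j i = C i j := hsym.apply i j
  rcases hoff i j hij with h0 | h1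
  · simp [Bent, HasArrow, toVertex, hji, h0]
  rw [sum_Bent_toVertex_mul_Lmat]
  rcases hheight i j h1 with hξ | hξ
  · rw [sum_range_Bent_mul C _ _ _ (s := e + 2) (t := e + 1) (by omega) (by omega)]
    · rw [sum_range_succ, add_sub_cancel_left, hji, h1, neg_neg, one_mul]
      congr 1
      omega
    all_goals intro n; simp only [HasArrow, hji, h1]; omega
  · rw [sum_range_Bent_mul C _ _ _ (s := e + 1) (t := e) (by omega) (by omega)]
    · rw [sum_range_succ, add_sub_cancel_left, hji, h1, neg_neg, one_mul]
      congr 1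
      omega
    all_goals intro n; simp only [HasArrow, hji, h1]; omega

lemma rowSum_recurrence (C : Matrix I I ℤ) (ξ : I → ℤ) {ℓ : ℕ} (j : I) (v : I × Fin (ℓ + 1))
    (r : ℤ) :
    rowSum C ξ j v r + rowSum C ξ j v (r - 2) +
        ∑ i ∈ univ.erase j, C j i * rowSum C ξ i v (r - 1) =
      if j = v.1 then
        2 * ((if ξ v.1 + 2 = r then 1 else 0) - if ξ v.1 - 2 * ((v.2 : ℕ) : ℤ) = r then 1 else 0)
      else 0 := by
  set k : ℕ → ℤ := fun b => ξ v.1 - 2 * ((v.2 : ℕ) : ℤ) + 2 * b - r with hk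
  set f : ℕ → ℤ := fun b => if k b = 0 then 1 else 0
  have hshift : ∀ i (t : ℤ), rowSum C ξ i v (r - t) =
      ∑ b ∈ range ((v.2 : ℕ) + 1), Nfun C i v.1 (k b + t) :=
    fun i t => sum_congr rfl fun b _ => congrArg _ (by simp only [hk]; ring)
  calc
    _ = ∑ b ∈ range ((v.2 : ℕ) + 1), (Nfun C j v.1 (k b) + Nfun C j v.1 (k b + 2) +
          ∑ i ∈ univ.erase j, C j i * Nfun C i v.1 (k b + 1)) := by
      have h0 : rowSum C ξ j v r = ∑ b ∈ range ((v.2 : ℕ) + 1), Nfun C j v.1 (k b) := rfl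
      simp only [h0, hshift, mul_sum, sum_add_distrib]
      rw [sum_comm (s := univ.erase j)]
    _ = ∑ b ∈ range ((v.2 : ℕ) + 1), if j = v.1 then 2 * (f (b + 1) - f b) else 0 := by
      refine sum_congr rfl fun b _ => ?_
      rw [Nfun_recurrence]
      simp only [f, show k (b + 1) = k b + 2 by simp only [hk]; push_cast; ring]
    _ = _ := by
      by_cases hj : j = v.1
      · simp only [hj, if_true]
        rw [← mul_sum, sum_range_sub f]
        simp only [f, hk]
        push_cast
        split_ifs <;> omega
      · simp only [hj, if_false, sum_const_zero]

theorem stmt14_general (C : Matrix I I ℤ) (hsym : C.IsSymm) (hdiag : ∀ i, C i i = 2)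
    (hoff : ∀ i j, i ≠ j → C i j = 0 ∨ C i j = -1)
    (ξ : I → ℤ) (hheight : ∀ i j, C i j = -1 → (ξ i = ξ j + 1 ∨ ξ j = ξ i + 1))
    (ℓ : ℕ) :
    ∀ w v : I × Fin (ℓ + 1), (w.2 : ℕ) < ℓ →
      (∑ u : I × Fin (ℓ + 1),
          Bent C (toVertex ξ u) (toVertex ξ w) * Lmat C ξ u v) =
        if toVertex ξ w = toVertex ξ v then 2 else 0 := by
  rintro ⟨j, e⟩ ⟨c, d⟩ he
  set r := ξ j - 2 * ((e : ℕ) : ℤ)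
  calc
    _ = -(rowSum C ξ j (c, d) r + rowSum C ξ j (c, d) (r - 2) +
          ∑ i ∈ univ.erase j, C j i * rowSum C ξ i (c, d) (r - 1)) := by
      rw [show toVertex ξ (j, e) = (j, r) from rfl, Fintype.sum_prod_type,
        ← add_sum_erase _ _ (mem_univ j),
        sum_Bent_mul_Lmat_self C hdiag ξ he,
        sum_congr rfl (fun i hi => sum_Bent_mul_Lmat_of_ne C hsym hoff ξ hheight he
          (ne_of_mem_erase hi) (c, d))]
      simp only [neg_mul, sum_neg_distrib]
      ring
    _ = _ := by
      rw [rowSum_recurrence]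
      simp only [toVertex, Prod.mk.injEq, r]
      by_cases hjc : j = c
      · subst hjc
        simp only [if_true, true_and]
        split_ifs <;> omega
      · simp [hjc]

/-- `(L^{≤ξ}_ℓ, B^{≤ξ}_ℓ)` is a compatible pair:
`((B^{≤ξ}_ℓ)ᵀ L^{≤ξ}_ℓ)(w, v) = Σ_u B(u,w)·L(u,v)` equals `2` if `w = v` and `0`
otherwise, for every mutable vertex `w` (i.e. `w ∈ Î^{≤ξ}_{ℓ−1}`) and every vertex `v`. -/
theorem stmt14 (C : Matrix I I ℤ) (hsym : C.IsSymm) (hdiag : ∀ i, C i i = 2)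
    (hoff : ∀ i j, i ≠ j → C i j = 0 ∨ C i j = -1)
    (ξ : I → ℤ) (hheight : ∀ i j, C i j = -1 → (ξ i = ξ j + 1 ∨ ξ j = ξ i + 1))
    (ℓ : ℕ) (hℓ : 1 ≤ ℓ) :
    ∀ w v : I × Fin (ℓ + 1), (w.2 : ℕ) < ℓ →
      (∑ u : I × Fin (ℓ + 1),
          Bent C (toVertex ξ u) (toVertex ξ w) * Lmat C ξ u v) =
        if toVertex ξ w = toVertex ξ v then 2 else 0 :=
  stmt14_general C hsym hdiag hoff ξ hheight ℓ
end
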